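/- Let s₀ < b ≤ +∞ and let h : [s₀, b) → ℝ be continuously differentiable with h(s) < 0 for all s ∈ [s₀, b). Then for each w₀ ∈ ℝ there exists a twice continuously differentiable function w : [s₀, b) → ℝ satisfying w'(s) = −(1 + w(s)²)·(1 − h(s)·w(s)) for all s ∈ [s₀, b) and w(s₀) = w₀, and any two such solutions coincide. -/

import Mathlib

/-!
Since `h < 0`, the right-hand side `-(1 + w²)(1 - h w)` is negative where `w ≥ 0` and positive
where `h w > 1`. On a compact interval `[s₀, c]` we have `h ≤ -δ < 0`, so every solution is
trapped in a strip `[-A, A]`. Truncating the vector field outside the strip makes it globally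
Lipschitz, Picard–Lindelöf then gives a solution on all of `[s₀, c]`, and the fence theorem shows
that it never leaves the strip, hence solves the original equation. The field is locally Lipschitz
in `w`, so solutions are unique, and the solutions on the intervals `[s₀, c]`, `c < b`, glue to
one on `[s₀, b)`. Bootstrapping `w' = -(1 + w²)(1 - h w)` with `h ∈ C¹` shows that it is `C²`.
-/

open Set Filter Topology
open scoped NNReal

/-- A solution of `w' = −(1 + w²)(1 − h w)` with `w(s₀) = w₀` on the interval
`[s₀, b)` (with `b` possibly `+∞`). -/
def IsNegSolOnIco (b : EReal) (h : ℝ → ℝ) (s₀ w₀ : ℝ) (w : ℝ → ℝ) : Prop :=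
  ContDiffOn ℝ 2 w {s : ℝ | s₀ ≤ s ∧ (s : EReal) < b} ∧
  w s₀ = w₀ ∧
  ∀ s : ℝ, s₀ ≤ s → (s : EReal) < b →
    HasDerivWithinAt w (-((1 + w s ^ 2) * (1 - h s * w s)))
      {u : ℝ | s₀ ≤ u ∧ (u : EReal) < b} s

section IntegralCurve

variable {f : ℝ → ℝ → ℝ} {w w₁ w₂ : ℝ → ℝ} {a c : ℝ}

lemma IsIntegralCurveOn.hasDerivWithinAt_Ici (hw : IsIntegralCurveOn w f (Icc a c)) {t : ℝ}
    (ht : t ∈ Ico a c) : HasDerivWithinAt w (f t (w t)) (Ici t) t :=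
  (hw t (Ico_subset_Icc_self ht)).mono_of_mem_nhdsWithin (Icc_mem_nhdsGE_of_mem ht)

theorem IsIntegralCurveOn.eqOn_Icc
    (hf : ∀ A, ∃ K, ∀ t ∈ Icc a c, LipschitzOnWith K (f t) (Icc (-A) A))
    (hw₁ : IsIntegralCurveOn w₁ f (Icc a c)) (hw₂ : IsIntegralCurveOn w₂ f (Icc a c))
    (ha : w₁ a = w₂ a) : EqOn w₁ w₂ (Icc a c) := by
  obtain ⟨A₁, hA₁⟩ := isCompact_Icc.exists_bound_of_continuousOn hw₁.continuousOn
  obtain ⟨A₂, hA₂⟩ := isCompact_Icc.exists_bound_of_continuousOn hw₂.continuousOn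
  obtain ⟨K, hK⟩ := hf (max A₁ A₂)
  exact ODE_solution_unique_of_mem_Icc_right (fun t ht ↦ hK t (Ico_subset_Icc_self ht))
    hw₁.continuousOn (fun t ht ↦ hw₁.hasDerivWithinAt_Ici ht)
    (fun t ht ↦ abs_le.1 <| (hA₁ t (Ico_subset_Icc_self ht)).trans (le_max_left _ _))
    hw₂.continuousOn (fun t ht ↦ hw₂.hasDerivWithinAt_Ici ht)
    (fun t ht ↦ abs_le.1 <| (hA₂ t (Ico_subset_Icc_self ht)).trans (le_max_right _ _)) ha


theorem exists_isIntegralCurveOn_Icc_of_barrier {m M x₀ : ℝ} {K : ℝ≥0} (hac : a ≤ c)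
    (hx₀ : x₀ ∈ Icc m M) (hcont : ∀ x ∈ Icc m M, ContinuousOn (f · x) (Icc a c))
    (hlip : ∀ t ∈ Icc a c, LipschitzOnWith K (f t) (Icc m M))
    (hm : ∀ t ∈ Icc a c, 0 < f t m) (hM : ∀ t ∈ Icc a c, f t M < 0) :
    ∃ w, w a = x₀ ∧ IsIntegralCurveOn w f (Icc a c) := by
  have hmM : m ≤ M := hx₀.1.trans hx₀.2
  set g : ℝ → ℝ → ℝ := fun t x ↦ f t (projIcc m M hmM x) with hg
  obtain ⟨B, hB⟩ := isCompact_Icc.exists_bound_of_continuousOn (hcont m (left_mem_Icc.2 hmM))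
  set L : ℝ≥0 := (B + K * (M - m)).toNNReal
  have hgL : ∀ t ∈ Icc a c, ∀ x, ‖g t x‖ ≤ L := by
    intro t ht x
    have hx := (projIcc m M hmM x).2
    calc ‖g t x‖ ≤ ‖f t m‖ + ‖g t x - f t m‖ := norm_le_norm_add_norm_sub' _ _
      _ ≤ ‖f t m‖ + K * ‖(projIcc m M hmM x : ℝ) - m‖ := by
          gcongr; exact (hlip t ht).norm_sub_le hx (left_mem_Icc.2 hmM)
      _ ≤ B + K * (M - m) := by
          gcongr
          · exact hB t ht
          · rw [Real.norm_of_nonneg (sub_nonneg.2 hx.1)]; linarith [hx.2]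
      _ ≤ L := Real.le_coe_toNNReal _
  have hPL : IsPicardLindelof g (tmin := a) (tmax := c) ⟨a, left_mem_Icc.2 hac⟩ x₀
      (L * (c - a)).toNNReal 0 L K :=
    { lipschitzOnWith := fun t ht ↦ by
        have : LipschitzOnWith (K * (1 * 1)) (g t) univ :=
          (hlip t ht).comp (LipschitzWith.subtype_val _ |>.comp
            (LipschitzWith.projIcc hmM)).lipschitzOnWith (fun x _ ↦ (projIcc m M hmM x).2)
        simpa using this.mono (subset_univ _)
      continuousOn := fun x _ ↦ hcont _ (projIcc m M hmM x).2
      norm_le := fun t ht x _ ↦ hgL t ht x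
      mul_max_le := by simp [max_eq_left (sub_nonneg.2 hac)] }
  obtain ⟨w, hw₀, hw⟩ := hPL.exists_eq_forall_mem_Icc_hasDerivWithinAt₀
  have hw : IsIntegralCurveOn w g (Icc a c) := hw
  have hwM : ∀ t ∈ Icc a c, w t ≤ M :=
    image_le_of_deriv_right_lt_deriv_boundary hw.continuousOn
      (fun t ht ↦ hw.hasDerivWithinAt_Ici ht) (B := fun _ ↦ M) (hw₀ ▸ hx₀.2)
      (fun _ ↦ hasDerivAt_const _ _)
      (fun t ht hwt ↦ by simpa [hg, hwt, projIcc_right] using hM t (Ico_subset_Icc_self ht))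
  have hmw : ∀ t ∈ Icc a c, m ≤ w t :=
    image_le_of_deriv_right_lt_deriv_boundary' (f := fun _ ↦ m) continuousOn_const
      (fun _ _ ↦ hasDerivWithinAt_const _ _ _) (hw₀ ▸ hx₀.1) hw.continuousOn
      (fun t ht ↦ hw.hasDerivWithinAt_Ici ht)
      (fun t ht hwt ↦ by simpa [hg, ← hwt, projIcc_left] using hm t (Ico_subset_Icc_self ht))
  refine ⟨w, hw₀, fun t ht ↦ ?_⟩
  simpa [hg, projIcc_of_mem hmM ⟨hmw t ht, hwM t ht⟩] using hw t ht

end IntegralCurve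

def realIco (s₀ : ℝ) (b : EReal) : Set ℝ := {s | s₀ ≤ s ∧ (s : EReal) < b}

section RealIco

variable {s₀ : ℝ} {b : EReal}

lemma Icc_subset_realIco {c : ℝ} (hc : (c : EReal) < b) : Icc s₀ c ⊆ realIco s₀ b :=
  fun _ ht ↦ ⟨ht.1, (EReal.coe_le_coe_iff.2 ht.2).trans_lt hc⟩

lemma uniqueDiffOn_realIco : UniqueDiffOn ℝ (realIco s₀ b) := by
  induction b using EReal.rec with
  | bot => simpa [realIco] using uniqueDiffOn_empty
  | coe y => simpa [realIco, Ico] using uniqueDiffOn_Ico s₀ y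
  | top => simpa [realIco, Ici] using uniqueDiffOn_Ici s₀

theorem exists_isIntegralCurveOn_realIco {f : ℝ → ℝ → ℝ} {x₀ : ℝ}
    (hex : ∀ c : ℝ, s₀ ≤ c → (c : EReal) < b →
      ∃ w, w s₀ = x₀ ∧ IsIntegralCurveOn w f (Icc s₀ c))
    (huniq : ∀ c : ℝ, (c : EReal) < b → ∀ w₁ w₂, IsIntegralCurveOn w₁ f (Icc s₀ c) →
      IsIntegralCurveOn w₂ f (Icc s₀ c) → w₁ s₀ = w₂ s₀ → EqOn w₁ w₂ (Icc s₀ c)) :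
    ∃ w, w s₀ = x₀ ∧ IsIntegralCurveOn w f (realIco s₀ b) := by
  classical
  choose sol hsol₀ hsol using hex
  let w : ℝ → ℝ := fun s ↦ if hs : s ∈ realIco s₀ b then sol s hs.1 hs.2 s else x₀
  have hw : ∀ c (hc₀ : s₀ ≤ c) (hc : (c : EReal) < b), EqOn w (sol c hc₀ hc) (Icc s₀ c) := by
    intro c hc₀ hc t ht
    have ht' := Icc_subset_realIco hc ht
    have hsub : Icc s₀ t ⊆ Icc s₀ c := Icc_subset_Icc_right ht.2
    simp only [w, dif_pos ht']
    exact huniq t ht'.2 _ _ (hsol t ht'.1 ht'.2) ((hsol c hc₀ hc).mono hsub)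
      ((hsol₀ _ _ _).trans (hsol₀ _ _ _).symm) ⟨ht.1, le_rfl⟩
  refine ⟨w, by simp only [w]; split_ifs <;> simp [hsol₀], fun s hs ↦ ?_⟩
  obtain ⟨c, hsc, hcb⟩ := EReal.exists_between_coe_real hs.2
  have hsc : s < c := EReal.coe_lt_coe_iff.1 hsc
  have hc₀ : s₀ ≤ c := hs.1.trans hsc.le
  have hIcc : Icc s₀ c ∈ 𝓝[realIco s₀ b] s :=
    mem_of_superset (inter_mem_nhdsWithin _ (Iio_mem_nhds hsc)) fun t ht ↦ ⟨ht.1.1, ht.2.le⟩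
  have hws : w s = sol c hc₀ hcb s := hw c hc₀ hcb ⟨hs.1, hsc.le⟩
  rw [hws]
  exact ((hsol c hc₀ hcb s ⟨hs.1, hsc.le⟩).mono_of_mem_nhdsWithin hIcc).congr_of_eventuallyEq
    (eventuallyEq_of_mem hIcc (hw c hc₀ hcb)) hws

end RealIco

theorem contDiffOn_succ_of_hasDerivWithinAt {𝕜 F : Type*} [NontriviallyNormedField 𝕜]
    [NormedAddCommGroup F] [NormedSpace 𝕜 F] {w g : 𝕜 → F} {s : Set 𝕜} {n : ℕ}
    (hs : UniqueDiffOn 𝕜 s) (hw : ∀ x ∈ s, HasDerivWithinAt w (g x) s x)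
    (hg : ContDiffOn 𝕜 n g s) : ContDiffOn 𝕜 (n + 1) w s := by
  rw [contDiffOn_succ_iff_derivWithin hs]
  exact ⟨fun x hx ↦ (hw x hx).differentiableWithinAt, by simp,
    hg.congr fun x hx ↦ (hw x hx).derivWithin (hs x hx)⟩

theorem exists_lipschitzOnWith_comp_prodMk {g : ℝ × ℝ → ℝ} (hg : ContDiff ℝ 1 g) {h : ℝ → ℝ}
    {T : Set ℝ} (hT : IsCompact T) (hh : ContinuousOn h T) (A : ℝ) :
    ∃ K, ∀ t ∈ T, LipschitzOnWith K (fun x ↦ g (h t, x)) (Icc (-A) A) := by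
  obtain ⟨H, hH⟩ := hT.exists_bound_of_continuousOn hh
  obtain ⟨K, hK⟩ := hg.contDiffOn.exists_lipschitzOnWith (s := Icc (-H) H ×ˢ Icc (-A) A)
    one_ne_zero ((convex_Icc _ _).prod (convex_Icc _ _)) (isCompact_Icc.prod isCompact_Icc)
  refine ⟨K, fun t ht ↦ ?_⟩
  have := hK.comp (LipschitzWith.prodMk_left (h t)).lipschitzOnWith
    fun x hx ↦ ⟨abs_le.1 (hH t ht), hx⟩
  rwa [mul_one] at this

def solitonField (h : ℝ → ℝ) (t x : ℝ) : ℝ := -((1 + x ^ 2) * (1 - h t * x))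

section SolitonField

variable {h : ℝ → ℝ} {t x : ℝ}

lemma solitonField_neg (ht : h t < 0) (hx : 0 ≤ x) : solitonField h t x < 0 :=
  neg_neg_of_pos <| mul_pos (by positivity) (by nlinarith)

lemma solitonField_pos (hx : 1 < h t * x) : 0 < solitonField h t x :=
  neg_pos.2 <| mul_neg_of_pos_of_neg (by positivity) (by linarith)

lemma exists_lipschitzOnWith_solitonField {T : Set ℝ} (hT : IsCompact T)
    (hh : ContinuousOn h T) (A : ℝ) :
    ∃ K, ∀ t ∈ T, LipschitzOnWith K (solitonField h t) (Icc (-A) A) :=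
  exists_lipschitzOnWith_comp_prodMk (g := fun p ↦ -((1 + p.2 ^ 2) * (1 - p.1 * p.2)))
    (by fun_prop) hT hh A

theorem exists_isIntegralCurveOn_solitonField_Icc {a c : ℝ} (hac : a ≤ c)
    (hh : ContinuousOn h (Icc a c)) (hneg : ∀ t ∈ Icc a c, h t < 0) (w₀ : ℝ) :
    ∃ w, w a = w₀ ∧ IsIntegralCurveOn w (solitonField h) (Icc a c) := by
  obtain ⟨t₁, ht₁, hmax⟩ := isCompact_Icc.exists_isMaxOn (nonempty_Icc.2 hac) hh
  have hδ : 0 < -h t₁ := neg_pos.2 (hneg t₁ ht₁)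
  set A := max |w₀| (2 / -h t₁)
  obtain ⟨K, hK⟩ := exists_lipschitzOnWith_solitonField isCompact_Icc hh A
  refine exists_isIntegralCurveOn_Icc_of_barrier hac (abs_le.1 (le_max_left _ _))
    (fun x _ ↦ by unfold solitonField; fun_prop) hK (fun t ht ↦ solitonField_pos ?_)
    (fun t ht ↦ solitonField_neg (hneg t ht) ((abs_nonneg _).trans (le_max_left _ _)))
  calc 1 < -h t₁ * (2 / -h t₁) := by rw [mul_div_cancel₀ _ hδ.ne']; norm_num
    _ ≤ -h t * A := mul_le_mul (neg_le_neg (hmax ht)) (le_max_right _ _) (by positivity)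
        (neg_nonneg.2 (hneg t ht).le)
    _ = h t * -A := by ring

theorem IsIntegralCurveOn.contDiffOn_two_of_solitonField {s : Set ℝ} {w : ℝ → ℝ}
    (hs : UniqueDiffOn ℝ s) (hh : ContDiffOn ℝ 1 h s)
    (hw : IsIntegralCurveOn w (solitonField h) s) : ContDiffOn ℝ 2 w s := by
  have hw₁ : ContDiffOn ℝ 1 w s := by
    refine contDiffOn_succ_of_hasDerivWithinAt (n := 0) hs hw (contDiffOn_zero.2 ?_)
    have := hw.continuousOn
    have := hh.continuousOn
    unfold solitonField
    fun_prop
  exact contDiffOn_succ_of_hasDerivWithinAt (n := 1) hs hw (by unfold solitonField; fun_prop)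

end SolitonField

lemma isNegSolOnIco_iff {b : EReal} {h : ℝ → ℝ} {s₀ w₀ : ℝ} {w : ℝ → ℝ} :
    IsNegSolOnIco b h s₀ w₀ w ↔ ContDiffOn ℝ 2 w (realIco s₀ b) ∧ w s₀ = w₀ ∧
      IsIntegralCurveOn w (solitonField h) (realIco s₀ b) :=
  and_congr Iff.rfl <| and_congr Iff.rfl
    ⟨fun hw s hs ↦ hw s hs.1 hs.2, fun hw s hs₀ hsb ↦ hw s ⟨hs₀, hsb⟩⟩

theorem existence_uniqueness_negative_case_general
    (s₀ : ℝ) (b : EReal)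
    (h : ℝ → ℝ)
    (hC1 : ContDiffOn ℝ 1 h {s : ℝ | s₀ ≤ s ∧ (s : EReal) < b})
    (hneg : ∀ s : ℝ, s₀ ≤ s → (s : EReal) < b → h s < 0) :
    ∀ w₀ : ℝ,
      (∃ w : ℝ → ℝ, IsNegSolOnIco b h s₀ w₀ w) ∧
      (∀ w₁ w₂ : ℝ → ℝ, IsNegSolOnIco b h s₀ w₀ w₁ → IsNegSolOnIco b h s₀ w₀ w₂ →
        ∀ s : ℝ, s₀ ≤ s → (s : EReal) < b → w₁ s = w₂ s) := by
  intro w₀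
  have hcont : ∀ c : ℝ, (c : EReal) < b → ContinuousOn h (Icc s₀ c) :=
    fun c hc ↦ hC1.continuousOn.mono (Icc_subset_realIco hc)
  have huniq : ∀ c : ℝ, (c : EReal) < b → ∀ w₁ w₂,
      IsIntegralCurveOn w₁ (solitonField h) (Icc s₀ c) →
      IsIntegralCurveOn w₂ (solitonField h) (Icc s₀ c) → w₁ s₀ = w₂ s₀ → EqOn w₁ w₂ (Icc s₀ c) :=
    fun c hc _ _ ↦ IsIntegralCurveOn.eqOn_Icc (exists_lipschitzOnWith_solitonField isCompact_Icc (hcont c hc))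
  refine ⟨?_, fun w₁ w₂ hw₁ hw₂ s hs₀ hsb ↦ ?_⟩
  · obtain ⟨w, hw₀, hw⟩ := exists_isIntegralCurveOn_realIco (fun c hc₀ hc ↦
      exists_isIntegralCurveOn_solitonField_Icc hc₀ (hcont c hc)
        (fun t ht ↦ hneg t ht.1 (Icc_subset_realIco hc ht).2) w₀) huniq
    exact ⟨w, isNegSolOnIco_iff.2 ⟨hw.contDiffOn_two_of_solitonField uniqueDiffOn_realIco hC1,
      hw₀, hw⟩⟩
  · rw [isNegSolOnIco_iff] at hw₁ hw₂
    exact huniq s hsb w₁ w₂ (hw₁.2.2.mono (Icc_subset_realIco hsb))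
      (hw₂.2.2.mono (Icc_subset_realIco hsb)) (hw₁.2.1.trans hw₂.2.1.symm) ⟨hs₀, le_rfl⟩

/-- If `h ∈ C¹[s₀, b)` is negative, then for each `w₀` the initial
value problem `w' = −(1 + w²)(1 − h w)`, `w(s₀) = w₀` has a unique `C²` solution on
`[s₀, b)`. -/
theorem existence_uniqueness_negative_case
    (s₀ : ℝ) (b : EReal) (hs₀b : (s₀ : EReal) < b)
    (h : ℝ → ℝ)
    (hC1 : ContDiffOn ℝ 1 h {s : ℝ | s₀ ≤ s ∧ (s : EReal) < b})
    (hneg : ∀ s : ℝ, s₀ ≤ s → (s : EReal) < b → h s < 0) :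
    ∀ w₀ : ℝ,
      (∃ w : ℝ → ℝ, IsNegSolOnIco b h s₀ w₀ w) ∧
      (∀ w₁ w₂ : ℝ → ℝ, IsNegSolOnIco b h s₀ w₀ w₁ → IsNegSolOnIco b h s₀ w₀ w₂ →
        ∀ s : ℝ, s₀ ≤ s → (s : EReal) < b → w₁ s = w₂ s) :=
  existence_uniqueness_negative_case_general s₀ b h hC1 hneg
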